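/- If a Hamiltonian cycle of the zebra exists on {0,1}^15 (consecutive vertices at Hamming distance 13), then for every k ≥ 15 a Hamiltonian cycle of the zebra exists on {0,1}^k. -/

import Mathlib

/-!
Split `{0,1}^(k+1)` into the two sheets `x₀ = 0` and `x₀ = 1`. Run the given cycle `f` of
`{0,1}^k` on the first sheet, then run it backwards on the second sheet after flipping a fixed set
of `d - 1` coordinates. Flipping is an isometry, so the steps inside a sheet still have length `d`;
because the second run is reversed, both junctions join some `v` on the first sheet to its flipped
copy on the second one, which are at distance `(d - 1) + 1 = d`. Starting from `k = 15`, `d = 13`,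
induction on `k` gives the theorem.
-/

open Function

namespace ZMod

variable {n : ℕ} [NeZero n]

theorem val_add_one_eq_mod (i : ZMod n) : (i + 1).val = (i.val + 1) % n := by
  rw [val_add, val_one_eq_one_mod, Nat.add_mod_mod]

theorem val_castHom_two_mul (i : ZMod (2 * n)) :
    (castHom (dvd_mul_left n 2) (ZMod n) i).val = i.val % n := by
  rw [castHom_apply, cast_eq_val, val_natCast]

theorem eq_of_castHom_two_mul_eq {i j : ZMod (2 * n)} (hij : i.val < n ↔ j.val < n)
    (h : castHom (dvd_mul_left n 2) (ZMod n) i = castHom (dvd_mul_left n 2) (ZMod n) j) :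
    i = j := by
  have hmod := congrArg val h
  rw [val_castHom_two_mul, val_castHom_two_mul] at hmod
  have hi := i.val_lt
  have hj := j.val_lt
  apply val_injective
  by_cases hin : i.val < n
  · rwa [Nat.mod_eq_of_lt hin, Nat.mod_eq_of_lt (hij.1 hin)] at hmod
  · rw [Nat.mod_eq_sub_mod (not_lt.1 hin), Nat.mod_eq_sub_mod (not_lt.1 (hin ∘ hij.2)),
      Nat.mod_eq_of_lt (by omega), Nat.mod_eq_of_lt (by omega)] at hmod
    omega

end ZMod

section DoubleCycle

variable {V : Type*} {n : ℕ} [NeZero n]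

local notation "π" => ZMod.castHom (dvd_mul_left n 2) (ZMod n)

def doubleCycle (f : ZMod n → V) (φ : V → V) (i : ZMod (2 * n)) : Bool × V :=
  if i.val < n then (false, f (π i)) else (true, φ (f (π (-1 - i))))

theorem doubleCycle_injective {f : ZMod n → V} {φ : V → V} (hf : Injective f)
    (hφ : Injective φ) : Injective (doubleCycle f φ) := by
  intro i j hij
  unfold doubleCycle at hij
  split_ifs at hij with hi hj hj
  · exact ZMod.eq_of_castHom_two_mul_eq (iff_of_true hi hj) (hf (Prod.ext_iff.1 hij).2)
  · simp at hij
  · simp at hij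
  · have h := hf (hφ (Prod.ext_iff.1 hij).2)
    rw [map_sub, map_sub, sub_right_inj] at h
    exact ZMod.eq_of_castHom_two_mul_eq (iff_of_false hi hj) h

theorem doubleCycle_bijective [Finite V] {f : ZMod n → V} {φ : V → V} (hf : Bijective f)
    (hφ : Injective φ) : Bijective (doubleCycle f φ) := by
  refine (doubleCycle_injective hf.1 hφ).bijective_of_nat_card_le ?_
  rw [Nat.card_prod, Nat.card_zmod, Nat.card_eq_fintype_card (α := Bool), Fintype.card_bool,
    ← Nat.card_eq_of_bijective f hf, Nat.card_zmod]

theorem doubleCycle_rel (R : Bool × V → Bool × V → Prop) {f : ZMod n → V} {φ : V → V}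
    (hlower : ∀ j, R (false, f j) (false, f (j + 1)))
    (hupper : ∀ j, R (true, φ (f (j + 1))) (true, φ (f j)))
    (hcross : R (false, f (-1)) (true, φ (f (-1))))
    (hreturn : R (true, φ (f 0)) (false, f 0)) (i : ZMod (2 * n)) :
    R (doubleCycle f φ i) (doubleCycle f φ (i + 1)) := by
  have hsucc := ZMod.val_add_one_eq_mod i
  have hi := i.val_lt
  unfold doubleCycle
  split_ifs with hlo hlo' hlo'
  · rw [map_add, map_one]
    exact hlower _
  · have hval : (i + 1).val = n := by
      rw [hsucc, Nat.mod_eq_of_lt (by omega)] at hlo' ⊢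
      omega
    have hzero : π (i + 1) = 0 := by
      rw [← ZMod.val_eq_zero, ZMod.val_castHom_two_mul, hval, Nat.mod_self]
    have hlast : π i = -1 := by
      rw [map_add, map_one] at hzero
      exact eq_neg_of_add_eq_zero_left hzero
    rw [hlast, map_sub, hzero, map_neg, map_one, sub_zero]
    exact hcross
  · have hzero : i + 1 = 0 := by
      rw [hsucc] at hlo'
      rw [← ZMod.val_eq_zero, hsucc]
      rcases Nat.lt_or_ge (i.val + 1) (2 * n) with h | h
      · rw [Nat.mod_eq_of_lt h] at hlo'
        omega
      · rw [show i.val + 1 = 2 * n by omega, Nat.mod_self]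
    rw [hzero, eq_neg_of_add_eq_zero_left hzero, sub_neg_eq_add, neg_add_cancel, map_zero]
    exact hreturn
  · have h : π (-1 - i) = π (-1 - (i + 1)) + 1 := by
      simp only [map_sub, map_add, map_neg, map_one]
      ring
    rw [h]
    exact hupper _

end DoubleCycle

section FlipOn

open Finset

variable {ι : Type*} [DecidableEq ι]

def flipOn (s : Finset ι) (v : ι → Bool) (j : ι) : Bool :=
  xor (decide (j ∈ s)) (v j)

theorem flipOn_flipOn (s : Finset ι) (v : ι → Bool) : flipOn s (flipOn s v) = v := by
  funext j
  simp [flipOn]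

theorem flipOn_injective (s : Finset ι) : Injective (flipOn s) :=
  LeftInverse.injective (flipOn_flipOn s)

variable [Fintype ι]

theorem hammingDist_flipOn_flipOn (s : Finset ι) (v w : ι → Bool) :
    hammingDist (flipOn s v) (flipOn s w) = hammingDist v w := by
  simp only [hammingDist, flipOn, ne_eq, Bool.xor_right_inj]

theorem hammingDist_flipOn_self (s : Finset ι) (v : ι → Bool) :
    hammingDist v (flipOn s v) = #s := by
  have hdiff (j : ι) : v j ≠ flipOn s v j ↔ j ∈ s := by
    by_cases hj : j ∈ s <;> simp [flipOn, hj]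
  simp only [hammingDist, hdiff, filter_mem_eq_inter, univ_inter]

end FlipOn

theorem hammingDist_cons {β : Type*} [DecidableEq β] {k : ℕ} (a b : β) (v w : Fin k → β) :
    hammingDist (Fin.cons a v : Fin (k + 1) → β) (Fin.cons b w) =
      (if a = b then 0 else 1) + hammingDist v w := by
  simp only [hammingDist, Finset.card_filter, Fin.sum_univ_succ, Fin.cons_zero, Fin.cons_succ,
    ite_not]

def HasHammingCycle (d k : ℕ) : Prop :=
  ∃ f : ZMod (2 ^ k) → (Fin k → Bool), Bijective f ∧ ∀ i, hammingDist (f i) (f (i + 1)) = d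

theorem HasHammingCycle.succ {d k : ℕ} (hd : 0 < d) (hdk : d ≤ k + 1)
    (h : HasHammingCycle d k) : HasHammingCycle d (k + 1) := by
  obtain ⟨f, hf, hfd⟩ := h
  obtain ⟨s, -, hs⟩ := Finset.exists_subset_card_eq (s := (Finset.univ : Finset (Fin k)))
    (n := d - 1) (by rw [Finset.card_univ, Fintype.card_fin]; omega)
  rw [HasHammingCycle, pow_succ']
  refine ⟨(fun p : Bool × (Fin k → Bool) ↦ (Fin.cons p.1 p.2 : Fin (k + 1) → Bool)) ∘
      doubleCycle f (flipOn s),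
    (Fin.consEquiv fun _ ↦ Bool).bijective.comp (doubleCycle_bijective hf (flipOn_injective s)),
    doubleCycle_rel
      (fun p q ↦ hammingDist (Fin.cons p.1 p.2 : Fin (k + 1) → Bool) (Fin.cons q.1 q.2) = d)
      ?_ ?_ ?_ ?_⟩
  · intro j
    rw [hammingDist_cons, if_pos rfl, zero_add, hfd]
  · intro j
    rw [hammingDist_cons, if_pos rfl, zero_add, hammingDist_flipOn_flipOn, hammingDist_comm, hfd]
  · rw [hammingDist_cons, if_neg Bool.false_ne_true, hammingDist_flipOn_self, hs]
    omega
  · rw [hammingDist_comm, hammingDist_cons, if_neg Bool.false_ne_true, hammingDist_flipOn_self,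
      hs]
    omega

theorem stmt_13
    (h : ∃ f : ZMod (2 ^ 15) → (Fin 15 → Bool), Function.Bijective f ∧
      ∀ i, hammingDist (f i) (f (i + 1)) = 13) :
    ∀ k : ℕ, 15 ≤ k → ∃ g : ZMod (2 ^ k) → (Fin k → Bool), Function.Bijective g ∧
      ∀ i, hammingDist (g i) (g (i + 1)) = 13 := by
  intro k hk
  induction k, hk using Nat.le_induction with
  | base => exact h
  | succ k hk ih => exact HasHammingCycle.succ (by norm_num) (by omega) ih
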